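/- arXiv:1705.09372 — 3 statements merged into one kernel-verified Lean document; each statement's English description precedes it below -/
import Mathlib

section
/- Let 0 < p ≤ 1/2 and let (m_n) be a sequence of natural numbers with m_n ≤ n and lim_{n→∞} m_n/n = λ for some λ ∈ [0,1]. For each n let X^n = (U^{m_n}, V^{n−m_n}) be the random binary string obtained by concatenating m_n i.i.d. Bernoulli(1/2) bits with n−m_n i.i.d. Bernoulli(p) bits (all bits independent). Then for every α > 0 and every choice of guessing functions G for the distributions of X^n, lim_{n→∞} (1/n) log₂ E[G(X^n)^α] = λα + (1−λ) α H_{1/(1+α)}(p). -/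
open Real Filter Finset

/-- Binary Rényi entropy of order `β` (base-2 logarithm). -/
noncomputable def Hb (β p : ℝ) : ℝ := (1 / (1 - β)) * Real.logb 2 (p ^ β + (1 - p) ^ β)

/-- Binary KL divergence `D(p‖q)` in bits (Lean's `logb 2 0 = 0` gives the `0·log 0 = 0` convention). -/
noncomputable def Dkl (p q : ℝ) : ℝ :=
  p * Real.logb 2 (p / q) + (1 - p) * Real.logb 2 ((1 - p) / (1 - q))

/-- Binary Shannon entropy in bits. -/
noncomputable def binEnt (p : ℝ) : ℝ := -(p * Real.logb 2 p) - (1 - p) * Real.logb 2 (1 - p)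

/-- `G` is a guessing function for the distribution `q` on the finite set `S`:
a bijection onto `{1, …, |S|}` ranking more likely elements first. -/
def IsGuessingFunction {S : Type*} [Fintype S] (q : S → ℝ) (G : S → ℕ) : Prop :=
  Function.Injective G ∧ (∀ x, G x ∈ Finset.Icc 1 (Fintype.card S)) ∧
    ∀ x y, q y < q x → G x < G y

/-- Distribution of `n` i.i.d. Bernoulli(`p`) bits (`true` has probability `p`). -/
noncomputable def bernDist (p : ℝ) (n : ℕ) (x : Fin n → Bool) : ℝ :=
  ∏ i, if x i then p else 1 - p

/-- Distribution of the concatenation `X^n = (U^{m_n}, V^{n−m_n})` of `m_n` i.i.d.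
Bernoulli(1/2) bits with `n − m_n` i.i.d. Bernoulli(`p`) bits. -/
noncomputable def concatDist (p : ℝ) (n mn : ℕ) (x : Fin n → Bool) : ℝ :=
  ∏ i : Fin n, if (i : ℕ) < mn then (1 : ℝ) / 2 else (if x i then p else 1 - p)

/-! Arikan's bounds: for a distribution `q` on a finite set `S`, `β = 1/(1+α)` and a guessing
function `G`, the moment `E[G^α]` lies between `(∑ q^β)^(1+α) / H_{|S|}^α` and `(∑ q^β)^(1+α)`,
where `H_k` is the `k`-th harmonic number. The upper bound holds because
`G x · q(x)^β ≤ ∑_y q(y)^β`, the lower one is Hölder's inequality with weights `1/G`. Taking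
logarithms, `log₂ E[G^α]` is `α H_β(q)` up to `α log₂ H_{2^n} = O(log n)` on strings of length
`n`. The Rényi entropy of the concatenated string is additive, `m_n + (n - m_n) H_β(p)`, and
dividing by `n` gives the limit. -/

lemma one_le_harmonic {k : ℕ} (hk : k ≠ 0) : (1 : ℝ) ≤ harmonic k := by
  rw [harmonic_eq_sum_Icc]
  push_cast
  simpa using single_le_sum (f := fun i : ℕ => (i : ℝ)⁻¹) (fun i _ => by positivity)
    (mem_Icc.mpr ⟨le_rfl, Nat.one_le_iff_ne_zero.mpr hk⟩)

noncomputable def renyiEntropy {S : Type*} [Fintype S] (β : ℝ) (q : S → ℝ) : ℝ :=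
  1 / (1 - β) * logb 2 (∑ x, q x ^ β)

namespace IsGuessingFunction

variable {S : Type*} [Fintype S] {q : S → ℝ} {G : S → ℕ}

lemma one_le (hG : IsGuessingFunction q G) (x : S) : 1 ≤ G x :=
  (mem_Icc.mp (hG.2.1 x)).1

lemma image_univ (hG : IsGuessingFunction q G) :
    univ.image G = Icc 1 (Fintype.card S) := by
  refine eq_of_subset_of_card_le (fun k hk => ?_) ?_
  · obtain ⟨x, -, rfl⟩ := mem_image.mp hk
    exact hG.2.1 x
  · rw [card_image_of_injective _ hG.1, card_univ, Nat.card_Icc, Nat.add_sub_cancel]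

lemma le_card_filter_le (hG : IsGuessingFunction q G) (x : S) :
    G x ≤ #{y | q x ≤ q y} := by
  have hsurj : Set.SurjOn G ({y | q x ≤ q y} : Finset S) (Icc 1 (G x)) := by
    intro k hk
    rw [coe_Icc, Set.mem_Icc] at hk
    have hk' : k ∈ univ.image G := by
      rw [hG.image_univ, mem_Icc]
      exact ⟨hk.1, hk.2.trans (mem_Icc.mp (hG.2.1 x)).2⟩
    obtain ⟨y, -, rfl⟩ := mem_image.mp hk'
    refine ⟨y, ?_, rfl⟩
    simpa using not_lt.mp fun hlt => (hG.2.2 x y hlt).not_ge hk.2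
  simpa using card_le_card_of_surjOn G hsurj

lemma sum_inv (hG : IsGuessingFunction q G) :
    ∑ x, ((G x : ℝ))⁻¹ = harmonic (Fintype.card S) := by
  rw [← sum_image (f := fun k : ℕ => ((k : ℝ))⁻¹) fun x _ y _ h => hG.1 h, hG.image_univ,
    harmonic_eq_sum_Icc]
  push_cast
  rfl

lemma mul_rpow_le_sum_rpow (hG : IsGuessingFunction q G) (hq : ∀ x, 0 ≤ q x) {β : ℝ}
    (hβ : 0 ≤ β) (x : S) : G x * q x ^ β ≤ ∑ y, q y ^ β :=
  calc (G x : ℝ) * q x ^ β ≤ #{y | q x ≤ q y} * q x ^ β := by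
        gcongr
        · exact rpow_nonneg (hq x) β
        · exact_mod_cast hG.le_card_filter_le x
    _ ≤ ∑ y ∈ {y | q x ≤ q y}, q y ^ β := by
        rw [← nsmul_eq_mul]
        exact card_nsmul_le_sum _ _ _ fun y hy =>
          rpow_le_rpow (hq x) (mem_filter.mp hy).2 hβ
    _ ≤ ∑ y, q y ^ β :=
        sum_le_sum_of_subset_of_nonneg (filter_subset _ _) fun y _ _ => rpow_nonneg (hq y) β

lemma sum_mul_rpow_le (hG : IsGuessingFunction q G) (hq : ∀ x, 0 ≤ q x) {α : ℝ} (hα : 0 ≤ α) :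
    ∑ x, q x * (G x : ℝ) ^ α ≤ (∑ x, q x ^ (1 / (1 + α))) ^ (1 + α) := by
  set β := 1 / (1 + α)
  set F := ∑ y, q y ^ β
  have hβ : 0 ≤ β := by positivity
  have hβα : β + β * α = 1 := by simp only [β]; field_simp
  -- `q = q^β (q^β)^α`, and `q^β G ≤ F` termwise
  have key : ∀ x, q x * (G x : ℝ) ^ α ≤ q x ^ β * F ^ α := fun x =>
    calc q x * (G x : ℝ) ^ α = q x ^ β * (G x * q x ^ β) ^ α := by
          rw [mul_rpow (Nat.cast_nonneg _) (rpow_nonneg (hq x) β), ← rpow_mul (hq x),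
            mul_left_comm, ← rpow_add' (hq x) (by rw [hβα]; norm_num), hβα, rpow_one, mul_comm]
      _ ≤ q x ^ β * F ^ α := by
          gcongr
          · exact rpow_nonneg (hq x) β
          · exact mul_nonneg (Nat.cast_nonneg _) (rpow_nonneg (hq x) β)
          · exact hG.mul_rpow_le_sum_rpow hq hβ x
  calc ∑ x, q x * (G x : ℝ) ^ α ≤ ∑ x, q x ^ β * F ^ α := sum_le_sum fun x _ => key x
    _ = F ^ (1 + α) := by
        rw [← sum_mul, rpow_one_add' (sum_nonneg fun y _ => rpow_nonneg (hq y) β) (by positivity)]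

lemma rpow_le_sum_mul_rpow_mul_harmonic (hG : IsGuessingFunction q G) (hq : ∀ x, 0 ≤ q x)
    {α : ℝ} (hα : 0 ≤ α) :
    (∑ x, q x ^ (1 / (1 + α))) ^ (1 + α) ≤
      (∑ x, q x * (G x : ℝ) ^ α) * (harmonic (Fintype.card S) : ℝ) ^ α := by
  set β := 1 / (1 + α)
  have hG0 : ∀ x, (0 : ℝ) < G x := fun x => by exact_mod_cast hG.one_le x
  have holder := inner_le_weight_mul_Lp_of_nonneg univ (p := 1 + α) (by linarith)
    (fun x => ((G x : ℝ))⁻¹) (fun x => q x ^ β * G x) (fun x => (inv_pos.mpr (hG0 x)).le)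
    (fun x => mul_nonneg (rpow_nonneg (hq x) β) (hG0 x).le)
  have hwf : ∀ x, ((G x : ℝ))⁻¹ * (q x ^ β * G x) = q x ^ β := fun x => by
    field_simp [(hG0 x).ne']
  have hwfp : ∀ x, ((G x : ℝ))⁻¹ * (q x ^ β * G x) ^ (1 + α) = q x * (G x : ℝ) ^ α := fun x => by
    rw [mul_rpow (rpow_nonneg (hq x) β) (hG0 x).le, ← rpow_mul (hq x),
      show β * (1 + α) = 1 by simp only [β]; field_simp, rpow_one, rpow_one_add' (hG0 x).le
      (by positivity)]
    field_simp [(hG0 x).ne']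
  simp only [hwf, hwfp, hG.sum_inv] at holder
  have hH : 0 ≤ (harmonic (Fintype.card S) : ℝ) := by
    rw [← hG.sum_inv]
    exact sum_nonneg fun x _ => (inv_pos.mpr (hG0 x)).le
  set H := (harmonic (Fintype.card S) : ℝ)
  set E := ∑ x, q x * (G x : ℝ) ^ α
  have hE : 0 ≤ E := sum_nonneg fun x _ => mul_nonneg (hq x) (rpow_nonneg (hG0 x).le α)
  have h1α : 0 < 1 + α := by linarith
  calc (∑ x, q x ^ β) ^ (1 + α) ≤ (H ^ (1 - (1 + α)⁻¹) * E ^ (1 + α)⁻¹) ^ (1 + α) :=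
        rpow_le_rpow (sum_nonneg fun x _ => rpow_nonneg (hq x) β) holder h1α.le
    _ = E * H ^ α := by
        rw [mul_rpow (rpow_nonneg hH _) (rpow_nonneg hE _), ← rpow_mul hH, ← rpow_mul hE,
          inv_mul_cancel₀ h1α.ne', rpow_one, mul_comm]
        congr 2
        field_simp
        ring

lemma abs_logb_sum_mul_rpow_sub_le (hG : IsGuessingFunction q G) (hq : ∀ x, 0 ≤ q x) {α : ℝ}
    (hα : 0 < α) (hF : 0 < ∑ x, q x ^ (1 / (1 + α))) :
    |logb 2 (∑ x, q x * (G x : ℝ) ^ α) - α * renyiEntropy (1 / (1 + α)) q| ≤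
      α * logb 2 (harmonic (Fintype.card S)) := by
  set F := ∑ x, q x ^ (1 / (1 + α))
  set E := ∑ x, q x * (G x : ℝ) ^ α
  have hS : Nonempty S := by
    by_contra h
    simp [F, not_nonempty_iff.mp h] at hF
  have hH1 := one_le_harmonic (Fintype.card_ne_zero (α := S))
  have hH : (0 : ℝ) < harmonic (Fintype.card S) := one_pos.trans_le hH1
  have hupper := hG.sum_mul_rpow_le hq hα.le
  have hlower := hG.rpow_le_sum_mul_rpow_mul_harmonic hq hα.le
  have hE : 0 < E := pos_of_mul_pos_left ((rpow_pos_of_pos hF _).trans_le hlower)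
    (rpow_nonneg hH.le α)
  have hαF : α * renyiEntropy (1 / (1 + α)) q = logb 2 (F ^ (1 + α)) := by
    rw [logb_rpow_eq_mul_logb_of_pos hF, renyiEntropy, ← mul_assoc]
    congr 1
    field_simp [hα.ne']
    ring
  rw [hαF, abs_sub_le_iff]
  constructor
  · nlinarith [logb_le_logb_of_le (b := 2) one_lt_two hE hupper, logb_nonneg one_lt_two hH1]
  · have := logb_le_logb_of_le (b := 2) one_lt_two (rpow_pos_of_pos hF _) hlower
    rw [logb_mul hE.ne' (rpow_pos_of_pos hH _).ne', logb_rpow_eq_mul_logb_of_pos hH] at this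
    linarith

end IsGuessingFunction

lemma concatDist_nonneg {p : ℝ} (hp0 : 0 ≤ p) (hp1 : p ≤ 1) {n mn : ℕ} (x : Fin n → Bool) :
    0 ≤ concatDist p n mn x :=
  prod_nonneg fun i _ => by split_ifs <;> linarith

lemma sum_concatDist_rpow {p : ℝ} (hp0 : 0 ≤ p) (hp1 : p ≤ 1) {n mn : ℕ} (hmn : mn ≤ n) (β : ℝ) :
    ∑ x, concatDist p n mn x ^ β = (2 * (1 / 2) ^ β) ^ mn * (p ^ β + (1 - p) ^ β) ^ (n - mn) := by
  have hfactor : ∀ (i : Fin n) (b : Bool),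
      0 ≤ if (i : ℕ) < mn then (1 : ℝ) / 2 else (if b then p else 1 - p) := by
    intro i b
    split_ifs <;> linarith
  have hsum : ∀ i : Fin n, ∑ b : Bool,
      (if (i : ℕ) < mn then (1 : ℝ) / 2 else (if b then p else 1 - p)) ^ β =
        if (i : ℕ) < mn then 2 * (1 / 2 : ℝ) ^ β else p ^ β + (1 - p) ^ β := by
    intro i
    split_ifs <;> simp
  simp_rw [concatDist, ← finsetProd_rpow _ _ fun i _ => hfactor i _]
  rw [← Fintype.prod_sum fun (i : Fin n) (b : Bool) =>
      (if (i : ℕ) < mn then (1 : ℝ) / 2 else (if b then p else 1 - p)) ^ β]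
  simp only [hsum]
  rw [Fin.prod_univ_eq_prod_range (fun i => if i < mn then 2 * (1 / 2 : ℝ) ^ β
      else p ^ β + (1 - p) ^ β), ← prod_range_mul_prod_Ico _ hmn,
    prod_congr rfl fun i hi => if_pos (mem_range.mp hi),
    prod_congr rfl fun i hi => if_neg (not_lt.mpr (mem_Ico.mp hi).1),
    prod_const, prod_const, card_range, Nat.card_Ico]

lemma renyiEntropy_concatDist {p : ℝ} (hp : 0 < p) (hp1 : p ≤ 1) {n mn : ℕ} (hmn : mn ≤ n)
    {β : ℝ} (hβ : β ≠ 1) :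
    renyiEntropy β (concatDist p n mn) = mn + (n - mn) * Hb β p := by
  have hc : 0 < p ^ β + (1 - p) ^ β := by
    have := rpow_nonneg (sub_nonneg.mpr hp1) β
    positivity
  have hβ' : 1 - β ≠ 0 := sub_ne_zero.mpr hβ.symm
  rw [renyiEntropy, sum_concatDist_rpow hp.le hp1 hmn, logb_mul (by positivity) (by positivity),
    logb_pow, logb_pow, logb_mul two_ne_zero (by positivity), logb_rpow_eq_mul_logb_of_pos
    one_half_pos, one_div (2 : ℝ), logb_inv, logb_self_eq_one one_lt_two, Nat.cast_sub hmn, Hb]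
  field_simp
  ring

lemma abs_logb_sum_concatDist_mul_rpow_sub_le {p : ℝ} (hp : 0 < p) (hp1 : p ≤ 1) {n mn : ℕ}
    (hmn : mn ≤ n) {α : ℝ} (hα : 0 < α) {G : (Fin n → Bool) → ℕ}
    (hG : IsGuessingFunction (concatDist p n mn) G) :
    |logb 2 (∑ x, concatDist p n mn x * (G x : ℝ) ^ α) - α * (mn + (n - mn) * Hb (1 / (1 + α)) p)|
      ≤ α * logb 2 (harmonic (2 ^ n)) := by
  have hF : 0 < ∑ x, concatDist p n mn x ^ (1 / (1 + α)) := by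
    rw [sum_concatDist_rpow hp.le hp1 hmn]
    have := rpow_nonneg (sub_nonneg.mpr hp1) (1 / (1 + α))
    positivity
  have hβ : 1 / (1 + α) ≠ 1 := ((div_lt_one (by linarith)).mpr (by linarith)).ne
  have := hG.abs_logb_sum_mul_rpow_sub_le (concatDist_nonneg hp.le hp1) hα hF
  rwa [renyiEntropy_concatDist hp hp1 hmn hβ, Fintype.card_fun, Fintype.card_bool,
    Fintype.card_fin] at this

lemma tendsto_logb_harmonic_two_pow_div_atTop :
    Tendsto (fun n : ℕ => logb 2 (harmonic (2 ^ n)) / n) atTop (nhds 0) := by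
  have hlog : Tendsto (fun n : ℕ => log (n + 1) / n / log 2) atTop (nhds 0) := by
    have := (tendsto_pow_log_div_mul_add_atTop 1 (-1) 1 one_ne_zero).comp
      (tendsto_atTop_add_const_right atTop 1 tendsto_natCast_atTop_atTop)
    simpa using this.div_const (log 2)
  have hbounds : ∀ n : ℕ, 1 ≤ (harmonic (2 ^ n) : ℝ) ∧ (harmonic (2 ^ n) : ℝ) ≤ n + 1 := by
    intro n
    refine ⟨one_le_harmonic (pow_ne_zero n two_ne_zero), ?_⟩
    have := harmonic_le_one_add_log (2 ^ n)
    push_cast at this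
    rw [log_pow] at this
    nlinarith [log_two_lt_d9, n.cast_nonneg (α := ℝ)]
  refine squeeze_zero (fun n => ?_) (fun n => ?_) hlog
  · exact div_nonneg (logb_nonneg one_lt_two (hbounds n).1) n.cast_nonneg
  · rw [div_right_comm, ← logb]
    exact div_le_div_of_nonneg_right
      (logb_le_logb_of_le one_lt_two (one_pos.trans_le (hbounds n).1) (hbounds n).2) n.cast_nonneg

theorem concat_guesswork_exponent_general
    (p : ℝ) (hp : 0 < p) (hp' : p ≤ 1 / 2)
    (m : ℕ → ℕ) (hm : ∀ n, m n ≤ n)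
    (lam : ℝ)
    (hlim : Tendsto (fun n : ℕ => (m n : ℝ) / n) atTop (nhds lam))
    (α : ℝ) (hα : 0 < α)
    (G : ∀ n, (Fin n → Bool) → ℕ)
    (hG : ∀ n, IsGuessingFunction (concatDist p n (m n)) (G n)) :
    Tendsto
      (fun n : ℕ => (1 / (n : ℝ)) *
        Real.logb 2 (∑ x : Fin n → Bool, concatDist p n (m n) x * (G n x : ℝ) ^ α))
      atTop (nhds (lam * α + (1 - lam) * α * Hb (1 / (1 + α)) p)) := by
  set H := Hb (1 / (1 + α)) p
  have hlimit : Tendsto (fun n : ℕ => 1 / (n : ℝ) * (α * (m n + (n - m n) * H))) atTop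
      (nhds (lam * α + (1 - lam) * α * H)) := by
    rw [show lam * α + (1 - lam) * α * H = α * (lam + (1 - lam) * H) by ring]
    refine ((hlim.add ((tendsto_const_nhds.sub hlim).mul_const H)).const_mul α).congr' ?_
    filter_upwards [eventually_ne_atTop 0] with n hn
    field_simp
  have herr : Tendsto (fun n : ℕ => 1 / (n : ℝ) * (α * logb 2 (harmonic (2 ^ n)))) atTop
      (nhds 0) := by
    have := tendsto_logb_harmonic_two_pow_div_atTop.const_mul α
    rw [mul_zero] at this
    exact this.congr fun n => by ring
  refine hlimit.congr_dist (squeeze_zero (fun n => dist_nonneg) (fun n => ?_) herr)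
  rw [dist_comm, Real.dist_eq, ← mul_sub, abs_mul, abs_of_nonneg (by positivity)]
  exact mul_le_mul_of_nonneg_left (abs_logb_sum_concatDist_mul_rpow_sub_le hp
    (hp'.trans (by norm_num)) (hm n) hα (hG n)) (by positivity)

/-- Lemma 1 of the paper: the guesswork exponent of the concatenation of a
uniform string of length `≈ λn` with an i.i.d. Bernoulli(`p`) string is
`λα + (1−λ) α H_{1/(1+α)}(p)`. -/
theorem concat_guesswork_exponent
    (p : ℝ) (hp : 0 < p) (hp' : p ≤ 1 / 2)
    (m : ℕ → ℕ) (hm : ∀ n, m n ≤ n)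
    (lam : ℝ) (hlam : lam ∈ Set.Icc (0 : ℝ) 1)
    (hlim : Tendsto (fun n : ℕ => (m n : ℝ) / n) atTop (nhds lam))
    (α : ℝ) (hα : 0 < α)
    (G : ∀ n, (Fin n → Bool) → ℕ)
    (hG : ∀ n, IsGuessingFunction (concatDist p n (m n)) (G n)) :
    Tendsto
      (fun n : ℕ => (1 / (n : ℝ)) *
        Real.logb 2 (∑ x : Fin n → Bool, concatDist p n (m n) x * (G n x : ℝ) ^ α))
      atTop (nhds (lam * α + (1 - lam) * α * Hb (1 / (1 + α)) p)) :=
  concat_guesswork_exponent_general p hp hp' m hm lam hlim α hα G hG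
end

section
/- For every ε ∈ (0,1) and every integer m ≥ 1, log₂(1 + ε²) < sup_{λ∈[0,1]} ( λ − m·D(λ‖ε) ). (That is, the expected-guesswork exponent of two centralized agents with BEC(ε) side information is strictly smaller than that of any finite number m of decentralized agents.) -/
open Real Filter Finset

/-!
The supremum is at least its value `ε` at `λ = ε`, where the divergence vanishes, and it is
bounded above because `D(λ‖ε) ≥ 0`. So it suffices that `1 + ε² < 2 ^ ε` on `(0, 1)`, which
follows from the tangent lines of `2 ^ x` at `0` (for `ε ≤ 1/2`) and at `1` (for `ε > 1/2`).
-/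

open InformationTheory

lemma Dkl_eq_klFun (p : ℝ) {q : ℝ} (hq₀ : 0 < q) (hq₁ : q < 1) :
    Dkl p q = (q * klFun (p / q) + (1 - q) * klFun ((1 - p) / (1 - q))) / log 2 := by
  have hq₁' : 0 < 1 - q := by linarith
  simp only [Dkl, Real.logb, klFun_apply]
  field_simp
  ring

lemma Dkl_nonneg {p q : ℝ} (hp : p ∈ Set.Icc (0 : ℝ) 1) (hq : q ∈ Set.Ioo (0 : ℝ) 1) :
    0 ≤ Dkl p q := by
  rw [Dkl_eq_klFun p hq.1 hq.2]
  have hq₁ : 0 ≤ 1 - q := by linarith [hq.2]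
  have hp₁ : 0 ≤ 1 - p := by linarith [hp.2]
  exact div_nonneg (add_nonneg (mul_nonneg hq.1.le (klFun_nonneg (div_nonneg hp.1 hq.1.le)))
    (mul_nonneg hq₁ (klFun_nonneg (div_nonneg hp₁ hq₁)))) (log_pos one_lt_two).le

@[simp]
lemma Dkl_self (q : ℝ) : Dkl q q = 0 := by
  have h : ∀ x : ℝ, x * Real.logb 2 (x / x) = 0 := fun x => by
    rcases eq_or_ne x 0 with rfl | hx
    · simp
    · simp [div_self hx]
  simp only [Dkl, h, add_zero]

lemma one_add_sq_lt_two_rpow {x : ℝ} (hx₀ : 0 < x) (hx₁ : x < 1) : 1 + x ^ 2 < (2 : ℝ) ^ x := by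
  have hlog₂_lo := log_two_gt_d9
  have hlog₂_hi := log_two_lt_d9
  rcases le_or_gt x (1 / 2) with hx | hx
  · calc 1 + x ^ 2 < x * log 2 + 1 := by nlinarith
      _ ≤ exp (log 2 * x) := by rw [mul_comm]; exact add_one_le_exp _
      _ = (2 : ℝ) ^ x := (rpow_def_of_pos two_pos x).symm
  · calc 1 + x ^ 2 < 2 * (-(log 2 * (1 - x)) + 1) := by nlinarith
      _ ≤ 2 * exp (-(log 2 * (1 - x))) := by gcongr; exact add_one_le_exp _
      _ = (2 : ℝ) ^ x := by
        rw [rpow_def_of_pos two_pos, ← exp_log (two_pos : (0 : ℝ) < 2), ← exp_add, log_exp]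
        ring_nf

theorem two_centralized_beat_decentralized_bec_general
    (ε : ℝ) (hε : ε ∈ Set.Ioo (0 : ℝ) 1) (m : ℕ) :
    Real.logb 2 (1 + ε ^ 2) < ⨆ lam : Set.Icc (0 : ℝ) 1, ((lam : ℝ) - m * Dkl lam ε) := by
  have hbdd : BddAbove (Set.range fun lam : Set.Icc (0 : ℝ) 1 => (lam : ℝ) - m * Dkl lam ε) := by
    refine ⟨1, ?_⟩
    rintro _ ⟨lam, rfl⟩
    have := mul_nonneg m.cast_nonneg (Dkl_nonneg lam.2 hε)
    linarith [lam.2.2]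
  calc Real.logb 2 (1 + ε ^ 2) < ε := (logb_lt_iff_lt_rpow one_lt_two (by positivity)).2
        (one_add_sq_lt_two_rpow hε.1 hε.2)
    _ = ε - m * Dkl ε ε := by simp
    _ ≤ _ := le_ciSup hbdd (⟨ε, hε.1.le, hε.2.le⟩ : Set.Icc (0 : ℝ) 1)

/-- two centralized agents beat any finite number `m` of decentralized agents
under BEC(`ε`) side information: `log₂(1 + ε²) < sup_{λ∈[0,1]} (λ − m·D(λ‖ε))`. -/
theorem two_centralized_beat_decentralized_bec
    (ε : ℝ) (hε : ε ∈ Set.Ioo (0 : ℝ) 1) (m : ℕ) (hm : 1 ≤ m) :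
    Real.logb 2 (1 + ε ^ 2) < ⨆ lam : Set.Icc (0 : ℝ) 1, ((lam : ℝ) - m * Dkl lam ε) :=
  two_centralized_beat_decentralized_bec_general ε hε m
end

section
/- For every δ ∈ [0,1/2], log₂( 4δ(1−δ) + 1 ) ≤ H(δ), with equality if and only if δ = 0 or δ = 1/2. -/
/-! Work in nats with the gap `g(x) = h(x) - log (1 + 4x(1-x))`, `h` the binary entropy, which
vanishes at `0` and `1/2`. Writing `u = x(1-x)`, one computes
`g'' = (12u - 1)(1 - 4u) / (u (1 + 4u)²)`, so `g` is strictly concave on `[0, x₀]` and strictly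
convex on `[x₀, 1/2]`, where `x₀(1 - x₀) = 1/12`. On the convex part `g` lies strictly above its
horizontal tangent at `1/2`; on the concave part it lies strictly above the chord from `(0, 0)` to
`(x₀, g x₀)`, and `g x₀ > 0` by the convex case. -/

open Real Filter Finset

open Topology

noncomputable def entropyGap (x : ℝ) : ℝ := binEntropy x - log (4 * x * (1 - x) + 1)

noncomputable def entropyGapInflection : ℝ := 1 / 2 - √6 / 6

local notation "x₀" => entropyGapInflection

lemma binEnt_eq_logb_add_entropyGap (p : ℝ) :
    binEnt p = logb 2 (4 * p * (1 - p) + 1) + entropyGap p / log 2 := by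
  simp only [binEnt, entropyGap, binEntropy, logb, log_inv]
  ring

lemma entropyGap_zero : entropyGap 0 = 0 := by
  simp [entropyGap]

lemma entropyGap_half : entropyGap (1 / 2) = 0 := by
  rw [entropyGap, one_div, binEntropy_two_inv]
  norm_num

lemma continuousOn_entropyGap : ContinuousOn entropyGap (Set.Icc 0 1) := by
  refine binEntropy_continuous.continuousOn.sub (ContinuousOn.log (by fun_prop) ?_)
  intro x ⟨hx0, hx1⟩
  nlinarith

lemma hasDerivAt_four_mul_mul_one_sub_add_one (x : ℝ) :
    HasDerivAt (fun y ↦ 4 * y * (1 - y) + 1) (4 - 8 * x) x :=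
  ((((hasDerivAt_id' x).const_mul 4).mul ((hasDerivAt_id' x).const_sub 1)).add_const 1).congr_deriv
    (by ring)

lemma hasDerivAt_entropyGap {x : ℝ} (hx0 : 0 < x) (hx1 : x < 1) :
    HasDerivAt entropyGap (log (1 - x) - log x - (4 - 8 * x) / (4 * x * (1 - x) + 1)) x :=
  ((hasDerivAt_binEntropy hx0.ne' hx1.ne).sub
    ((hasDerivAt_four_mul_mul_one_sub_add_one x).log (by nlinarith))).congr_deriv (by ring)

lemma deriv2_entropyGap {x : ℝ} (hx0 : 0 < x) (hx1 : x < 1) :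
    deriv^[2] entropyGap x = (12 * (x * (1 - x)) - 1) * (1 - 4 * (x * (1 - x))) /
      (x * (1 - x) * (4 * x * (1 - x) + 1) ^ 2) := by
  have hderiv : deriv entropyGap =ᶠ[𝓝 x]
      fun y ↦ log (1 - y) - log y - (4 - 8 * y) / (4 * y * (1 - y) + 1) := by
    filter_upwards [Ioo_mem_nhds hx0 hx1] with y ⟨hy0, hy1⟩
    exact (hasDerivAt_entropyGap hy0 hy1).deriv
  have h1x : 1 - x ≠ 0 := by linarith
  have hq : 0 < 4 * x * (1 - x) + 1 := by nlinarith
  have hlin : HasDerivAt (fun y ↦ 4 - 8 * y) (-8) x :=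
    (((hasDerivAt_id' x).const_mul 8).const_sub 4).congr_deriv (by ring)
  have hlog : HasDerivAt (fun y ↦ log (1 - y)) (-1 / (1 - x)) x :=
    (((hasDerivAt_id' x).const_sub 1).log h1x).congr_deriv (by ring)
  have hderiv2 : HasDerivAt (fun y ↦ log (1 - y) - log y - (4 - 8 * y) / (4 * y * (1 - y) + 1))
      (-1 / (1 - x) - x⁻¹ - (-8 * (4 * x * (1 - x) + 1) - (4 - 8 * x) * (4 - 8 * x)) /
        (4 * x * (1 - x) + 1) ^ 2) x :=
    (hlog.sub (hasDerivAt_log hx0.ne')).sub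
      (hlin.div (hasDerivAt_four_mul_mul_one_sub_add_one x) hq.ne')
  rw [Function.iterate_succ_apply, Function.iterate_one, hderiv.deriv_eq, hderiv2.deriv]
  have : x * (1 - x) * 4 + 1 ≠ 0 := by linarith
  field_simp
  ring

lemma entropyGapInflection_pos : 0 < x₀ := by
  have : √6 < 3 := by rw [sqrt_lt' (by norm_num)]; norm_num
  unfold entropyGapInflection; linarith

lemma entropyGapInflection_lt_half : x₀ < 1 / 2 := by
  have : 0 < √6 := by positivity
  unfold entropyGapInflection; linarith

lemma mul_one_sub_sub_one_div_twelve (x : ℝ) :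
    x * (1 - x) - 1 / 12 = (x - x₀) * (1 - x₀ - x) := by
  unfold entropyGapInflection
  linear_combination (-1 / 36) * sq_sqrt (show (0 : ℝ) ≤ 6 by norm_num)

lemma strictConcaveOn_entropyGap : StrictConcaveOn ℝ (Set.Icc 0 x₀) entropyGap := by
  have hx₀ := entropyGapInflection_lt_half
  refine strictConcaveOn_of_deriv2_neg (convex_Icc _ _)
    (continuousOn_entropyGap.mono (Set.Icc_subset_Icc_right (by linarith))) ?_
  rw [interior_Icc]
  rintro x ⟨hx0, hx⟩
  have hu : x * (1 - x) < 1 / 12 := by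
    have := mul_one_sub_sub_one_div_twelve x
    nlinarith
  rw [deriv2_entropyGap hx0 (by linarith)]
  refine div_neg_of_neg_of_pos (mul_neg_of_neg_of_pos (by linarith) (by linarith)) ?_
  have hu0 : 0 < x * (1 - x) := mul_pos hx0 (by linarith)
  exact mul_pos hu0 (pow_pos (by linarith) 2)

lemma strictConvexOn_entropyGap : StrictConvexOn ℝ (Set.Icc x₀ (1 / 2)) entropyGap := by
  have hx₀ := entropyGapInflection_pos
  refine strictConvexOn_of_deriv2_pos (convex_Icc _ _)
    (continuousOn_entropyGap.mono (Set.Icc_subset_Icc (by linarith) (by norm_num))) ?_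
  rw [interior_Icc]
  rintro x ⟨hx, hx1⟩
  have hu : 1 / 12 < x * (1 - x) := by
    have := mul_one_sub_sub_one_div_twelve x
    nlinarith
  have hu' : x * (1 - x) < 1 / 4 := by nlinarith
  rw [deriv2_entropyGap (by linarith) (by linarith)]
  exact div_pos (mul_pos (by linarith) (by linarith))
    (mul_pos (by linarith) (pow_pos (by linarith) 2))

lemma entropyGap_pos_of_inflection_le {x : ℝ} (hx : x₀ ≤ x) (hx1 : x < 1 / 2) :
    0 < entropyGap x := by
  have hderiv : HasDerivAt entropyGap 0 (1 / 2) :=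
    (hasDerivAt_entropyGap (by norm_num) (by norm_num)).congr_deriv (by norm_num)
  have hslope := strictConvexOn_entropyGap.slope_lt_of_hasDerivAt ⟨hx, hx1.le⟩
    ⟨entropyGapInflection_lt_half.le, le_rfl⟩ hx1 hderiv
  rw [slope_def_field, entropyGap_half, div_lt_iff₀ (by linarith)] at hslope
  linarith

lemma entropyGap_pos {x : ℝ} (hx0 : 0 < x) (hx1 : x < 1 / 2) : 0 < entropyGap x := by
  obtain hx | hx := le_or_gt x₀ x
  · exact entropyGap_pos_of_inflection_le hx hx1
  have hx₀ := entropyGapInflection_pos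
  have hmin := strictConcaveOn_entropyGap.lt_on_openSegment (Set.left_mem_Icc.2 hx₀.le)
    (Set.right_mem_Icc.2 hx₀.le) hx₀.ne (by rw [openSegment_eq_Ioo hx₀]; exact ⟨hx0, hx⟩)
  rwa [entropyGap_zero, min_eq_left
    (entropyGap_pos_of_inflection_le le_rfl entropyGapInflection_lt_half).le] at hmin

/-- `log₂(4δ(1−δ)+1) ≤ H(δ)` on `[0,1/2]`, with equality iff `δ = 0` or
`δ = 1/2`. -/
theorem log_le_binEnt (δ : ℝ) (hδ : δ ∈ Set.Icc (0 : ℝ) (1 / 2)) :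
    Real.logb 2 (4 * δ * (1 - δ) + 1) ≤ binEnt δ ∧
    (Real.logb 2 (4 * δ * (1 - δ) + 1) = binEnt δ ↔ δ = 0 ∨ δ = 1 / 2) := by
  rw [binEnt_eq_logb_add_entropyGap]
  by_cases hends : δ = 0 ∨ δ = 1 / 2
  · have hgap : entropyGap δ = 0 := by
      rcases hends with rfl | rfl
      exacts [entropyGap_zero, entropyGap_half]
    rw [hgap, zero_div, add_zero]
    exact ⟨le_rfl, iff_of_true rfl hends⟩
  · obtain ⟨hne_zero, hne_half⟩ := not_or.1 hends
    have hgap := div_pos (entropyGap_pos (hδ.1.lt_of_ne' hne_zero) (hδ.2.lt_of_ne hne_half))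
      (log_pos one_lt_two)
    exact ⟨by linarith, iff_of_false (by linarith) hends⟩
end
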